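/- arXiv:2010.03151 — 5 statements merged into one kernel-verified Lean document; each statement's English description precedes it below -/
import Mathlib

section
/- Let p be a prime with p ≠ 2 and p ≠ 5, let α ≥ 1, let k ≥ 1, let β = ord_p(10^k − 1) (the p-adic valuation), and let h be the multiplicative order of 10^k modulo p^{α+β}. Then h > 1, and for every c ≥ 1, p^α divides ρ_{c,k} if and only if h divides c. -/
/-- `v n` is the sum of the primes and of the exponents greater than 1
in the prime factorization of `n` (exponents equal to 1 are omitted). -/
def v (n : ℕ) : ℕ :=
  ∑ p ∈ n.primeFactors, (p + if n.factorization p = 1 then 0 else n.factorization p)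

/-- decimal digit reversal -/
def r (n : ℕ) : ℕ := Nat.ofDigits 10 (Nat.digits 10 n).reverse

/-- `n` is v-palindromic if `10 ∤ n`, `n ≠ r n` and `v n = v (r n)`. -/
def VPalindromic (n : ℕ) : Prop := ¬ (10 ∣ n) ∧ n ≠ r n ∧ v n = v (r n)

/-- `ρ_{c,k}` -/
def rho (c k : ℕ) : ℕ := ∑ i ∈ Finset.range c, 10 ^ (k * i)

/-- `φ_{p,δ}(α) = v(p^{α+δ}) - v(p^α)` as an integer. -/
def phi (p δ α : ℕ) : ℤ := (v (p ^ (α + δ)) : ℤ) - (v (p ^ α) : ℤ)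

/-!
Write `x = 10 ^ k`. Since `ρ_{c,k} (x - 1) = x ^ c - 1` and `p ^ β` exactly divides `x - 1`,
`p ^ α ∣ ρ_{c,k}` holds iff `p ^ (α + β) ∣ x ^ c - 1`, i.e. iff `x ^ c = 1` in `ZMod (p ^ (α + β))`,
i.e. iff the order `h` divides `c`. As `p ∤ 10`, `x` is a unit there, so `h ≠ 0`; and `h ≠ 1`
because `p ^ α ∤ ρ_{1,k} = 1`.
-/

theorem rho_mul_sub_one (c k : ℕ) : rho c k * (10 ^ k - 1) = 10 ^ (k * c) - 1 := by
  simp only [rho, pow_mul]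
  exact geom_sum_mul_of_one_le (Nat.one_le_pow _ _ (by norm_num)) c

theorem Nat.Prime.pow_dvd_iff_pow_add_factorization_dvd_mul {p a b : ℕ} (hp : p.Prime)
    (hb : b ≠ 0) (α : ℕ) : p ^ α ∣ a ↔ p ^ (α + b.factorization p) ∣ a * b := by
  rcases eq_or_ne a 0 with rfl | ha
  · simp
  rw [hp.pow_dvd_iff_le_factorization ha, hp.pow_dvd_iff_le_factorization (mul_ne_zero ha hb),
    Nat.factorization_mul ha hb, Finsupp.add_apply, Nat.add_le_add_iff_right]

theorem ZMod.natCast_eq_one_iff_dvd_sub_one {m x : ℕ} (hx : 1 ≤ x) :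
    (x : ZMod m) = 1 ↔ m ∣ x - 1 := by
  rw [← Nat.cast_one, ZMod.natCast_eq_natCast_iff, Nat.ModEq.comm, Nat.modEq_iff_dvd' hx]

theorem ZMod.orderOf_natCast_dvd_iff {m x : ℕ} (hx : 1 ≤ x) (c : ℕ) :
    orderOf (x : ZMod m) ∣ c ↔ m ∣ x ^ c - 1 := by
  rw [orderOf_dvd_iff_pow_eq_one, ← Nat.cast_pow,
    ZMod.natCast_eq_one_iff_dvd_sub_one (Nat.one_le_pow _ _ hx)]

theorem ZMod.orderOf_natCast_pos {m x : ℕ} [NeZero m] (hx : x.Coprime m) :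
    0 < orderOf (x : ZMod m) :=
  (isOfFinOrder_iff_isUnit.mpr ((ZMod.isUnit_iff_coprime x m).mpr hx)).orderOf_pos

theorem Nat.Prime.coprime_ten {p : ℕ} (hp : p.Prime) (hp2 : p ≠ 2) (hp5 : p ≠ 5) :
    Nat.Coprime p 10 :=
  Nat.Coprime.mul_right ((Nat.coprime_primes hp Nat.prime_two).mpr hp2)
    ((Nat.coprime_primes hp Nat.prime_five).mpr hp5)

theorem stmt4 (p : ℕ) (hp : p.Prime) (hp2 : p ≠ 2) (hp5 : p ≠ 5)
    (α : ℕ) (hα : 1 ≤ α) (k : ℕ) (hk : 1 ≤ k)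
    (β : ℕ) (hβ : β = (10 ^ k - 1).factorization p)
    (h : ℕ) (hh : h = orderOf (10 ^ k : ZMod (p ^ (α + β)))) :
    1 < h ∧ ∀ c : ℕ, 1 ≤ c → (p ^ α ∣ rho c k ↔ h ∣ c) := by
  have hx : 1 ≤ 10 ^ k := Nat.one_le_pow _ _ (by norm_num)
  have hx_sub_one : 10 ^ k - 1 ≠ 0 := by
    have : 10 ^ 1 ≤ 10 ^ k := Nat.pow_le_pow_right (by norm_num) hk
    omega
  have hh_cast : h = orderOf ((10 ^ k : ℕ) : ZMod (p ^ (α + β))) := by rw [hh]; push_cast; rfl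
  have dvd_rho_iff : ∀ c, p ^ α ∣ rho c k ↔ h ∣ c := fun c => by
    rw [hp.pow_dvd_iff_pow_add_factorization_dvd_mul hx_sub_one, ← hβ, rho_mul_sub_one, pow_mul,
      hh_cast, ZMod.orderOf_natCast_dvd_iff hx]
  have h_pos : 0 < h := by
    have : NeZero (p ^ (α + β)) := ⟨pow_ne_zero _ hp.ne_zero⟩
    rw [hh_cast]
    exact ZMod.orderOf_natCast_pos ((hp.coprime_ten hp2 hp5).pow _ _).symm
  have h_ne_one : h ≠ 1 := fun h_one => by
    have : p ^ α ∣ 1 := by simpa [rho] using (dvd_rho_iff 1).mpr (h_one ▸ one_dvd h)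
    exact (Nat.one_lt_pow (by omega) hp.one_lt).not_ge (Nat.le_of_dvd one_pos this)
  exact ⟨by omega, fun c _ => dvd_rho_iff c⟩
end

section
/- For every c ≥ 1, 819·ρ_{c,3} is v-palindromic if and only if c is odd, or (272 divides c and gcd(c, 91) = 1). -/
/-! ### auxiliary lemmas -/

lemma geom_nat (x n : ℕ) (hx : 1 ≤ x) :
    (x - 1) * (∑ i ∈ Finset.range n, x ^ i) + 1 = x ^ n := by
  have h := geom_sum_mul (x:ℤ) n
  zify [hx]
  push_cast at h ⊢
  linarith

lemma sum_mod (x n p : ℕ) (h : x % p = 1) :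
    (∑ i ∈ Finset.range n, x ^ i) % p = n % p := by
  induction n with
  | zero => simp
  | succ n ih =>
    rw [Finset.sum_range_succ, Nat.add_mod, ih, Nat.pow_mod, h, one_pow,
      Nat.add_mod n 1 p]

lemma v_mul_coprime (m n : ℕ) (hm : m ≠ 0) (hn : n ≠ 0) (h : Nat.Coprime m n) :
    v (m * n) = v m + v n := by
  unfold v
  rw [h.primeFactors_mul, Finset.sum_union h.disjoint_primeFactors]
  have hf : (m * n).factorization = m.factorization + n.factorization :=
    Nat.factorization_mul hm hn
  congr 1
  · apply Finset.sum_congr rfl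
    intro p hp
    obtain ⟨hp', hpm, -⟩ := Nat.mem_primeFactors.mp hp
    have hpn : n.factorization p = 0 := by
      apply Nat.factorization_eq_zero_of_not_dvd
      intro hd
      exact hp'.one_lt.ne' (Nat.eq_one_of_dvd_coprimes h hpm hd)
    rw [hf]; simp [hpn]
  · apply Finset.sum_congr rfl
    intro p hp
    obtain ⟨hp', hpn, -⟩ := Nat.mem_primeFactors.mp hp
    have hpm : m.factorization p = 0 := by
      apply Nat.factorization_eq_zero_of_not_dvd
      intro hd
      exact hp'.one_lt.ne' (Nat.eq_one_of_dvd_coprimes h hd hpn)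
    rw [hf]; simp [hpm]

lemma v_prime_pow (p k : ℕ) (hp : p.Prime) (hk : k ≠ 0) :
    v (p ^ k) = p + if k = 1 then 0 else k := by
  unfold v
  rw [Nat.primeFactors_prime_pow hk hp, hp.factorization_pow]
  simp

/-- `g p k` is the contribution of `p^k` to `v`. -/
def g (p k : ℕ) : ℕ := if k = 0 then 0 else p + if k = 1 then 0 else k

lemma v_pmul (p k x : ℕ) (hp : p.Prime) (hx : x ≠ 0) (hpx : ¬ p ∣ x) :
    v (p ^ k * x) = g p k + v x := by
  rcases Nat.eq_zero_or_pos k with hk | hk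
  · subst hk; simp [g]
  · rw [v_mul_coprime _ _ (pow_ne_zero _ hp.pos.ne') hx
      (((Nat.Prime.coprime_iff_not_dvd hp).mpr hpx).pow_left _),
      v_prime_pow p k hp (by omega)]
    unfold g
    split_ifs <;> omega

lemma not_dvd_pmul (p q k x : ℕ) (hp : p.Prime) (hq : q.Prime) (hne : p ≠ q)
    (hx : ¬ p ∣ x) : ¬ p ∣ q ^ k * x := by
  rw [hp.dvd_mul]
  push_neg
  exact ⟨fun h => hne ((Nat.prime_dvd_prime_iff_eq hp hq).mp (hp.dvd_of_dvd_pow h)), hx⟩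

/-! ### digits of 819·ρ -/

lemma rho_succ (n : ℕ) : rho (n+1) 3 = 1000 * rho n 3 + 1 := by
  unfold rho
  rw [Finset.sum_range_succ']
  simp only [Nat.mul_zero, pow_zero]
  congr 1
  rw [Finset.mul_sum]
  exact Finset.sum_congr rfl fun i _ => by ring

lemma rho_succ' (n : ℕ) : rho (n+1) 3 = rho n 3 + 10 ^ (3*n) := by
  unfold rho; rw [Finset.sum_range_succ]

lemma rho_pos (c : ℕ) (hc : 1 ≤ c) : 0 < rho c 3 := by
  obtain ⟨n, rfl⟩ := Nat.exists_eq_add_of_le hc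
  rw [add_comm, rho_succ]; omega

lemma digits_step (x : ℕ) (hx : 0 < x) :
    Nat.digits 10 (1000 * x + 819) = 9 :: 1 :: 8 :: Nat.digits 10 x := by
  rw [Nat.digits_def' (by norm_num : (1:ℕ) < 10) (by omega)]
  have h1 : (1000 * x + 819) % 10 = 9 := by omega
  have h2 : (1000 * x + 819) / 10 = 100 * x + 81 := by omega
  rw [h1, h2, Nat.digits_def' (by norm_num : (1:ℕ) < 10) (by omega)]
  have h3 : (100 * x + 81) % 10 = 1 := by omega
  have h4 : (100 * x + 81) / 10 = 10 * x + 8 := by omega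
  rw [h3, h4, Nat.digits_def' (by norm_num : (1:ℕ) < 10) (by omega)]
  have h5 : (10 * x + 8) % 10 = 8 := by omega
  have h6 : (10 * x + 8) / 10 = x := by omega
  rw [h5, h6]

lemma digits_819 : Nat.digits 10 819 = [9, 1, 8] := by norm_num

lemma r_main (c : ℕ) (hc : 1 ≤ c) :
    (Nat.digits 10 (819 * rho c 3)).length = 3 * c ∧ r (819 * rho c 3) = 918 * rho c 3 := by
  induction c with
  | zero => omega
  | succ n ih =>
    rcases Nat.eq_zero_or_pos n with hn | hn
    · subst hn
      have h1 : rho 1 3 = 1 := by unfold rho; simp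
      rw [h1]
      norm_num [r, digits_819, Nat.ofDigits]
    · obtain ⟨hlen, hrev⟩ := ih hn
      have hkey : 819 * rho (n+1) 3 = 1000 * (819 * rho n 3) + 819 := by
        rw [rho_succ]; ring
      have hpos : 0 < 819 * rho n 3 := by
        have := rho_pos n hn; positivity
      rw [hkey, digits_step _ hpos]
      constructor
      · simp [hlen]; ring
      · unfold r at hrev ⊢
        rw [digits_step _ hpos]
        have hrw : (9 :: 1 :: 8 :: Nat.digits 10 (819 * rho n 3)).reverse
            = (Nat.digits 10 (819 * rho n 3)).reverse ++ [8, 1, 9] := by simp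
        rw [hrw, Nat.ofDigits_append, hrev]
        simp only [List.length_reverse, hlen]
        have h918 : Nat.ofDigits 10 [8,1,9] = 918 := by norm_num [Nat.ofDigits]
        rw [h918, rho_succ']
        ring

/-! ### the geometric identity -/

lemma key_geom (c : ℕ) : 999 * rho c 3 + 1 = 1000 ^ c := by
  have h := geom_nat 1000 c (by norm_num)
  have hr : rho c 3 = ∑ i ∈ Finset.range c, 1000 ^ i :=
    Finset.sum_congr rfl fun i _ => by rw [pow_mul]; norm_num
  rw [hr]
  simpa using h

/-! ### the order of 10 mod 17 -/

lemma pow10_mod17 (n : ℕ) : 10 ^ n % 17 = 10 ^ (n % 16) % 17 := by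
  conv_lhs => rw [← Nat.div_add_mod n 16]
  rw [pow_add, Nat.mul_mod, pow_mul, Nat.pow_mod]
  norm_num

lemma pow10_17 (n : ℕ) : 10 ^ n % 17 = 1 ↔ 16 ∣ n := by
  constructor
  · intro h
    rw [pow10_mod17] at h
    obtain ⟨s, hs, hlt⟩ : ∃ s, n % 16 = s ∧ s < 16 := ⟨_, rfl, Nat.mod_lt _ (by norm_num)⟩
    rw [hs] at h
    interval_cases s <;> first | omega | norm_num at h
  · rintro ⟨k, rfl⟩
    rw [pow10_mod17, Nat.mul_mod_right]
    norm_num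

/-! ### factorization facts -/

lemma fact_transfer (ρ p q : ℕ) (hρ : ρ ≠ 0) (hq : q ≠ 0) (hpq : ¬ p ∣ q) :
    (q * ρ).factorization p = ρ.factorization p := by
  rw [Nat.factorization_mul hq hρ, Finsupp.add_apply,
    Nat.factorization_eq_zero_of_not_dvd hpq, zero_add]

/-- exact valuation via `n = d * S`, `p‖d`, and `p∣S ↔ p∣m`. -/
lemma fact_even' (c ρ p x m : ℕ) (hp : p.Prime) (hρ : ρ ≠ 0)
    (hx : 1 ≤ x) (hgeom : 999 * ρ + 1 = x ^ m)
    (hd : p ∣ x - 1) (hd2 : ¬ p * p ∣ x - 1) (h999 : ¬ p ∣ 999)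
    (hmod : x % p = 1) (hm : 1 ≤ m) (hxbig : 1000 ≤ x) :
    (¬ p ∣ m → ρ.factorization p = 1) ∧ (p ∣ m → 2 ≤ ρ.factorization p) := by
  set S := ∑ i ∈ Finset.range m, x ^ i with hS
  have hgeo2 : (x - 1) * S + 1 = x ^ m := geom_nat x m hx
  have hxm : x ≤ x ^ m := Nat.le_self_pow (by omega) x
  have hSne : S ≠ 0 := by
    intro h0
    rw [h0] at hgeo2
    omega
  have hx1ne : x - 1 ≠ 0 := by omega
  have heq : 999 * ρ = (x - 1) * S := by omega
  have e1 : (999 * ρ).factorization p = ρ.factorization p :=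
    fact_transfer ρ p 999 hρ (by norm_num) h999
  have hfd : (x - 1).factorization p = 1 := by
    have l1 : 1 ≤ (x - 1).factorization p := by
      rw [← hp.pow_dvd_iff_le_factorization hx1ne, pow_one]; exact hd
    have l2 : ¬ 2 ≤ (x - 1).factorization p := by
      rw [← hp.pow_dvd_iff_le_factorization hx1ne, pow_two]; exact hd2
    omega
  have e2 : (999 * ρ).factorization p = 1 + S.factorization p := by
    rw [heq, Nat.factorization_mul hx1ne hSne, Finsupp.add_apply, hfd]
  have hSm : S % p = m % p := sum_mod x m p hmod
  have hdvd : p ∣ S ↔ p ∣ m := by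
    rw [Nat.dvd_iff_mod_eq_zero, Nat.dvd_iff_mod_eq_zero, hSm]
  constructor
  · intro hnd
    have : S.factorization p = 0 :=
      Nat.factorization_eq_zero_of_not_dvd (fun h => hnd (hdvd.mp h))
    omega
  · intro hdm
    have : 0 < S.factorization p := hp.factorization_pos_of_dvd hSne (hdvd.mpr hdm)
    omega

lemma trich_7_13 (c : ℕ) (hc : 1 ≤ c) (p : ℕ) (hp : p.Prime)
    (hd : p ∣ 999999) (hd2 : ¬ p * p ∣ 999999) (h999 : ¬ p ∣ 999)
    (hmod : 1000000 % p = 1) (hodd : 1000 % p ≠ 1) (hp2 : p ≠ 2) :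
    (¬2 ∣ c → (rho c 3).factorization p = 0) ∧
    (2 ∣ c → ¬p ∣ c → (rho c 3).factorization p = 1) ∧
    (2 ∣ c → p ∣ c → 2 ≤ (rho c 3).factorization p) := by
  have hρ : rho c 3 ≠ 0 := (rho_pos c hc).ne'
  have hg : 999 * rho c 3 + 1 = 1000 ^ c := key_geom c
  have hone : 1 % p = 1 := Nat.one_mod_eq_one.mpr hp.one_lt.ne'
  refine ⟨?_, ?_⟩
  · intro h2
    apply Nat.factorization_eq_zero_of_not_dvd
    obtain ⟨k, hk⟩ : ∃ k, c = 2 * k + 1 := ⟨c / 2, by omega⟩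
    have hsplit : (1000:ℕ) ^ c = 1000000 ^ k * 1000 := by
      rw [hk, pow_succ, pow_mul]
      norm_num
    have hpm : (1000:ℕ) ^ c % p = 1000 % p := by
      rw [hsplit, Nat.mul_mod, Nat.pow_mod, hmod, one_pow, hone, one_mul,
        Nat.mod_mod_of_dvd 1000 dvd_rfl]
    intro hdvd
    obtain ⟨t, ht⟩ := hdvd
    apply hodd
    have h1 : (999 * rho c 3 + 1) % p = 1 := by
      rw [ht, show 999 * (p * t) + 1 = p * (999 * t) + 1 by ring, Nat.add_mod,
        Nat.mul_mod_right, hone]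
      simpa using hone
    rw [hg, hpm] at h1
    exact h1
  · have main : 2 ∣ c → ((¬ p ∣ c → (rho c 3).factorization p = 1) ∧
        (p ∣ c → 2 ≤ (rho c 3).factorization p)) := by
      intro h2
      obtain ⟨m, hm⟩ := h2
      have hgeom : 999 * rho c 3 + 1 = 1000000 ^ m := by
        rw [hg, hm, pow_mul]
        norm_num
      have hmn : 1 ≤ m := by omega
      have e1 : (1000000:ℕ) - 1 = 999999 := by norm_num
      have key := fact_even' c (rho c 3) p 1000000 m hp hρ (by norm_num) hgeom
        (e1 ▸ hd) (e1 ▸ hd2) h999 hmod hmn (by norm_num)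
      have hcm : p ∣ c ↔ p ∣ m := by
        constructor
        · intro h
          have h' : p ∣ 2 * m := hm ▸ h
          rcases (Nat.Prime.dvd_mul hp).mp h' with h2' | hm'
          · exact absurd ((Nat.prime_dvd_prime_iff_eq hp Nat.prime_two).mp h2') hp2
          · exact hm'
        · intro h
          exact hm ▸ Dvd.dvd.mul_left h 2
      exact ⟨fun h7 => key.1 (fun hh => h7 (hcm.mpr hh)), fun h7 => key.2 (hcm.mp h7)⟩
    exact ⟨fun h2 hp7 => (main h2).1 hp7, fun h2 hp7 => (main h2).2 hp7⟩

lemma trich_17 (c : ℕ) (hc : 1 ≤ c) :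
    (¬16 ∣ c → (rho c 3).factorization 17 = 0) ∧
    (16 ∣ c → ¬17 ∣ c → (rho c 3).factorization 17 = 1) ∧
    (16 ∣ c → 17 ∣ c → 2 ≤ (rho c 3).factorization 17) := by
  have hρ : rho c 3 ≠ 0 := (rho_pos c hc).ne'
  have hg : 999 * rho c 3 + 1 = 1000 ^ c := key_geom c
  have hpow : (1000:ℕ) ^ c = 10 ^ (3 * c) := by rw [pow_mul]; norm_num
  have main : 16 ∣ c → ((¬ 17 ∣ c → (rho c 3).factorization 17 = 1) ∧
      (17 ∣ c → 2 ≤ (rho c 3).factorization 17)) := by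
    intro h16
    obtain ⟨m, hm⟩ := h16
    have hgeom : 999 * rho c 3 + 1 = (10 ^ 48) ^ m := by
      rw [hg, hpow, hm, show 3 * (16 * m) = 48 * m by ring, pow_mul]
    have hmn : 1 ≤ m := by omega
    have key := fact_even' c (rho c 3) 17 (10 ^ 48) m (by norm_num) hρ (by norm_num)
      hgeom (by norm_num) (by norm_num) (by norm_num) (by norm_num) hmn (by norm_num)
    exact ⟨fun h17 => key.1 (fun hh => h17 (by omega)),
      fun h17 => key.2 (by omega)⟩
  refine ⟨?_, fun a b => (main a).1 b, fun a b => (main a).2 b⟩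
  · intro h16
    apply Nat.factorization_eq_zero_of_not_dvd
    intro hdvd
    obtain ⟨t, ht⟩ := hdvd
    have h1 : 10 ^ (3 * c) % 17 = 1 := by
      rw [← hpow, ← hg, ht]
      omega
    have := (pow10_17 (3 * c)).mp h1
    omega

lemma v_formula (ρ : ℕ) (hρ : ρ ≠ 0) (hodd : ¬ 2 ∣ ρ) :
    ∃ W, v (819 * ρ) = g 3 (ρ.factorization 3 + 2) + g 7 (ρ.factorization 7 + 1) +
        g 13 (ρ.factorization 13 + 1) + g 17 (ρ.factorization 17) + W ∧
      v (918 * ρ) = g 2 1 + g 3 (ρ.factorization 3 + 3) + g 7 (ρ.factorization 7) +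
        g 13 (ρ.factorization 13) + g 17 (ρ.factorization 17 + 1) + W := by
  have p2 : Nat.Prime 2 := by norm_num
  have p3 : Nat.Prime 3 := by norm_num
  have p7 : Nat.Prime 7 := by norm_num
  have p13 : Nat.Prime 13 := by norm_num
  have p17 : Nat.Prime 17 := by norm_num
  set w1 := ρ / 3 ^ ρ.factorization 3 with hw1def
  have hw1 : 3 ^ ρ.factorization 3 * w1 = ρ := Nat.ordProj_mul_ordCompl_eq_self ρ 3
  have hw1ne : w1 ≠ 0 := (Nat.ordCompl_pos 3 hρ).ne'
  have h3w1 : ¬ 3 ∣ w1 := Nat.not_dvd_ordCompl p3 hρ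
  have hw1f : w1.factorization = ρ.factorization.erase 3 := Nat.factorization_ordCompl ρ 3
  have hw1f7 : w1.factorization 7 = ρ.factorization 7 := by
    rw [hw1f, Finsupp.erase_ne (by norm_num)]
  have hw1f13 : w1.factorization 13 = ρ.factorization 13 := by
    rw [hw1f, Finsupp.erase_ne (by norm_num)]
  have hw1f17 : w1.factorization 17 = ρ.factorization 17 := by
    rw [hw1f, Finsupp.erase_ne (by norm_num)]
  set w2 := w1 / 7 ^ w1.factorization 7 with hw2def
  have hw2 : 7 ^ ρ.factorization 7 * w2 = w1 := by
    rw [← hw1f7]; exact Nat.ordProj_mul_ordCompl_eq_self w1 7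
  have hw2ne : w2 ≠ 0 := (Nat.ordCompl_pos 7 hw1ne).ne'
  have h7w2 : ¬ 7 ∣ w2 := Nat.not_dvd_ordCompl p7 hw1ne
  have hw2f : w2.factorization = w1.factorization.erase 7 := Nat.factorization_ordCompl w1 7
  have hw2f13 : w2.factorization 13 = ρ.factorization 13 := by
    rw [hw2f, Finsupp.erase_ne (by norm_num), hw1f13]
  have hw2f17 : w2.factorization 17 = ρ.factorization 17 := by
    rw [hw2f, Finsupp.erase_ne (by norm_num), hw1f17]
  set w3 := w2 / 13 ^ w2.factorization 13 with hw3def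
  have hw3 : 13 ^ ρ.factorization 13 * w3 = w2 := by
    rw [← hw2f13]; exact Nat.ordProj_mul_ordCompl_eq_self w2 13
  have hw3ne : w3 ≠ 0 := (Nat.ordCompl_pos 13 hw2ne).ne'
  have h13w3 : ¬ 13 ∣ w3 := Nat.not_dvd_ordCompl p13 hw2ne
  have hw3f : w3.factorization = w2.factorization.erase 13 := Nat.factorization_ordCompl w2 13
  have hw3f17 : w3.factorization 17 = ρ.factorization 17 := by
    rw [hw3f, Finsupp.erase_ne (by norm_num), hw2f17]
  set w := w3 / 17 ^ w3.factorization 17 with hwdef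
  have hw : 17 ^ ρ.factorization 17 * w = w3 := by
    rw [← hw3f17]; exact Nat.ordProj_mul_ordCompl_eq_self w3 17
  have hwne : w ≠ 0 := (Nat.ordCompl_pos 17 hw3ne).ne'
  have h17w : ¬ 17 ∣ w := Nat.not_dvd_ordCompl p17 hw3ne
  -- divisibility chain
  have hww3 : w ∣ w3 := Nat.ordCompl_dvd w3 17
  have hww2 : w ∣ w2 := hww3.trans (Nat.ordCompl_dvd w2 13)
  have hww1 : w ∣ w1 := hww2.trans (Nat.ordCompl_dvd w1 7)
  have hwρ : w ∣ ρ := hww1.trans (Nat.ordCompl_dvd ρ 3)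
  have h3w : ¬ 3 ∣ w := fun h => h3w1 (h.trans hww1)
  have h7w : ¬ 7 ∣ w := fun h => h7w2 (h.trans hww2)
  have h13w : ¬ 13 ∣ w := fun h => h13w3 (h.trans hww3)
  have h2w : ¬ 2 ∣ w := fun h => hodd (h.trans hwρ)
  have hdecomp : ρ = 3 ^ ρ.factorization 3 * (7 ^ ρ.factorization 7 *
      (13 ^ ρ.factorization 13 * (17 ^ ρ.factorization 17 * w))) := by
    rw [hw, hw3, hw2, hw1]
  -- not-dvd for composite products
  have nd17w : ¬ 17 ∣ w := h17w
  have nd13 : ¬ 13 ∣ 17 ^ ρ.factorization 17 * w :=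
    not_dvd_pmul 13 17 _ _ p13 p17 (by norm_num) h13w
  have nd13' : ¬ 13 ∣ 17 ^ (ρ.factorization 17 + 1) * w :=
    not_dvd_pmul 13 17 _ _ p13 p17 (by norm_num) h13w
  have ne17 : (17:ℕ) ^ ρ.factorization 17 * w ≠ 0 :=
    Nat.mul_ne_zero (pow_ne_zero _ (by norm_num)) hwne
  have ne17' : (17:ℕ) ^ (ρ.factorization 17 + 1) * w ≠ 0 :=
    Nat.mul_ne_zero (pow_ne_zero _ (by norm_num)) hwne
  have ne13 : (13:ℕ) ^ (ρ.factorization 13 + 1) * (17 ^ ρ.factorization 17 * w) ≠ 0 :=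
    Nat.mul_ne_zero (pow_ne_zero _ (by norm_num)) ne17
  have ne13' : (13:ℕ) ^ ρ.factorization 13 * (17 ^ (ρ.factorization 17 + 1) * w) ≠ 0 :=
    Nat.mul_ne_zero (pow_ne_zero _ (by norm_num)) ne17'
  have nd7 : ¬ 7 ∣ 13 ^ (ρ.factorization 13 + 1) * (17 ^ ρ.factorization 17 * w) :=
    not_dvd_pmul 7 13 _ _ p7 p13 (by norm_num)
      (not_dvd_pmul 7 17 _ _ p7 p17 (by norm_num) h7w)
  have nd7' : ¬ 7 ∣ 13 ^ ρ.factorization 13 * (17 ^ (ρ.factorization 17 + 1) * w) :=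
    not_dvd_pmul 7 13 _ _ p7 p13 (by norm_num)
      (not_dvd_pmul 7 17 _ _ p7 p17 (by norm_num) h7w)
  have ne7 : (7:ℕ) ^ (ρ.factorization 7 + 1) *
      (13 ^ (ρ.factorization 13 + 1) * (17 ^ ρ.factorization 17 * w)) ≠ 0 :=
    Nat.mul_ne_zero (pow_ne_zero _ (by norm_num)) ne13
  have ne7' : (7:ℕ) ^ ρ.factorization 7 *
      (13 ^ ρ.factorization 13 * (17 ^ (ρ.factorization 17 + 1) * w)) ≠ 0 :=
    Nat.mul_ne_zero (pow_ne_zero _ (by norm_num)) ne13'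
  have nd3 : ¬ 3 ∣ 7 ^ (ρ.factorization 7 + 1) *
      (13 ^ (ρ.factorization 13 + 1) * (17 ^ ρ.factorization 17 * w)) :=
    not_dvd_pmul 3 7 _ _ p3 p7 (by norm_num)
      (not_dvd_pmul 3 13 _ _ p3 p13 (by norm_num)
        (not_dvd_pmul 3 17 _ _ p3 p17 (by norm_num) h3w))
  have nd3' : ¬ 3 ∣ 7 ^ ρ.factorization 7 *
      (13 ^ ρ.factorization 13 * (17 ^ (ρ.factorization 17 + 1) * w)) :=
    not_dvd_pmul 3 7 _ _ p3 p7 (by norm_num)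
      (not_dvd_pmul 3 13 _ _ p3 p13 (by norm_num)
        (not_dvd_pmul 3 17 _ _ p3 p17 (by norm_num) h3w))
  have ne3' : (3:ℕ) ^ (ρ.factorization 3 + 3) * (7 ^ ρ.factorization 7 *
      (13 ^ ρ.factorization 13 * (17 ^ (ρ.factorization 17 + 1) * w))) ≠ 0 :=
    Nat.mul_ne_zero (pow_ne_zero _ (by norm_num)) ne7'
  have nd2 : ¬ 2 ∣ 3 ^ (ρ.factorization 3 + 3) * (7 ^ ρ.factorization 7 *
      (13 ^ ρ.factorization 13 * (17 ^ (ρ.factorization 17 + 1) * w))) :=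
    not_dvd_pmul 2 3 _ _ p2 p3 (by norm_num)
      (not_dvd_pmul 2 7 _ _ p2 p7 (by norm_num)
        (not_dvd_pmul 2 13 _ _ p2 p13 (by norm_num)
          (not_dvd_pmul 2 17 _ _ p2 p17 (by norm_num) h2w)))
  have hNeq : 819 * ρ = 3 ^ (ρ.factorization 3 + 2) * (7 ^ (ρ.factorization 7 + 1) *
      (13 ^ (ρ.factorization 13 + 1) * (17 ^ ρ.factorization 17 * w))) := by
    conv_lhs => rw [hdecomp]
    ring
  have hMeq : 918 * ρ = 2 ^ 1 * (3 ^ (ρ.factorization 3 + 3) * (7 ^ ρ.factorization 7 *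
      (13 ^ ρ.factorization 13 * (17 ^ (ρ.factorization 17 + 1) * w)))) := by
    conv_lhs => rw [hdecomp]
    ring
  refine ⟨v w, ?_, ?_⟩
  · rw [hNeq, v_pmul 3 _ _ p3 ne7 nd3, v_pmul 7 _ _ p7 ne13 nd7,
      v_pmul 13 _ _ p13 ne17 nd13, v_pmul 17 _ _ p17 hwne h17w]
    ring
  · rw [hMeq, v_pmul 2 _ _ p2 ne3' nd2, v_pmul 3 _ _ p3 ne7' nd3',
      v_pmul 7 _ _ p7 ne13' nd7', v_pmul 13 _ _ p13 ne17' nd13',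
      v_pmul 17 _ _ p17 hwne h17w]
    ring

lemma g_def (p k : ℕ) : g p k = if k = 0 then 0 else p + if k = 1 then 0 else k := rfl

lemma g_big (p k : ℕ) (h : 2 ≤ k) : g p k = p + k := by
  rw [g_def, if_neg (by omega : ¬ k = 0), if_neg (by omega : ¬ k = 1)]

set_option maxHeartbeats 2000000 in
theorem stmt13 (c : ℕ) (hc : 1 ≤ c) :
    VPalindromic (819 * rho c 3) ↔ Odd c ∨ (272 ∣ c ∧ Nat.gcd c 91 = 1) := by
  have hρpos := rho_pos c hc
  have hρ : rho c 3 ≠ 0 := hρpos.ne'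
  have hg := key_geom c
  have h1000 : (1000:ℕ) ∣ 1000 ^ c := dvd_pow_self 1000 (by omega)
  have hodd : ¬ 2 ∣ rho c 3 := by omega
  have h10 : ¬ 10 ∣ 819 * rho c 3 := by omega
  obtain ⟨hlen, hr⟩ := r_main c hc
  have hne : 819 * rho c 3 ≠ 918 * rho c 3 := by omega
  obtain ⟨W, hN, hM⟩ := v_formula (rho c 3) hρ hodd
  obtain ⟨t7a, t7b, t7c⟩ := trich_7_13 c hc 7 (by norm_num) (by norm_num) (by norm_num)
    (by norm_num) (by norm_num) (by norm_num) (by norm_num)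
  obtain ⟨u7a, u7b, u7c⟩ := trich_7_13 c hc 13 (by norm_num) (by norm_num) (by norm_num)
    (by norm_num) (by norm_num) (by norm_num) (by norm_num)
  obtain ⟨s7a, s7b, s7c⟩ := trich_17 c hc
  have d7 : (¬2 ∣ c ∧ g 7 ((rho c 3).factorization 7 + 1) = 7 ∧ g 7 ((rho c 3).factorization 7) = 0) ∨
      (2 ∣ c ∧ ¬7 ∣ c ∧ g 7 ((rho c 3).factorization 7 + 1) = 9 ∧ g 7 ((rho c 3).factorization 7) = 7) ∨
      (2 ∣ c ∧ 7 ∣ c ∧ g 7 ((rho c 3).factorization 7 + 1) = g 7 ((rho c 3).factorization 7) + 1) := by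
    by_cases h2 : 2 ∣ c
    · by_cases h7 : 7 ∣ c
      · have h := t7c h2 h7
        exact Or.inr (Or.inr ⟨h2, h7,
          by rw [g_big 7 _ (by omega), g_big 7 _ (by omega)]; omega⟩)
      · have h := t7b h2 h7
        exact Or.inr (Or.inl ⟨h2, h7, by rw [h]; norm_num [g_def],
          by rw [h]; norm_num [g_def]⟩)
    · have h := t7a h2
      exact Or.inl ⟨h2, by rw [h]; norm_num [g_def], by rw [h]; norm_num [g_def]⟩
  have d13 : (¬2 ∣ c ∧ g 13 ((rho c 3).factorization 13 + 1) = 13 ∧ g 13 ((rho c 3).factorization 13) = 0) ∨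
      (2 ∣ c ∧ ¬13 ∣ c ∧ g 13 ((rho c 3).factorization 13 + 1) = 15 ∧ g 13 ((rho c 3).factorization 13) = 13) ∨
      (2 ∣ c ∧ 13 ∣ c ∧ g 13 ((rho c 3).factorization 13 + 1) = g 13 ((rho c 3).factorization 13) + 1) := by
    by_cases h2 : 2 ∣ c
    · by_cases h13 : 13 ∣ c
      · have h := u7c h2 h13
        exact Or.inr (Or.inr ⟨h2, h13,
          by rw [g_big 13 _ (by omega), g_big 13 _ (by omega)]; omega⟩)
      · have h := u7b h2 h13
        exact Or.inr (Or.inl ⟨h2, h13, by rw [h]; norm_num [g_def],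
          by rw [h]; norm_num [g_def]⟩)
    · have h := u7a h2
      exact Or.inl ⟨h2, by rw [h]; norm_num [g_def], by rw [h]; norm_num [g_def]⟩
  have d17 : (¬16 ∣ c ∧ g 17 ((rho c 3).factorization 17) = 0 ∧ g 17 ((rho c 3).factorization 17 + 1) = 17) ∨
      (16 ∣ c ∧ ¬17 ∣ c ∧ g 17 ((rho c 3).factorization 17) = 17 ∧ g 17 ((rho c 3).factorization 17 + 1) = 19) ∨
      (16 ∣ c ∧ 17 ∣ c ∧ g 17 ((rho c 3).factorization 17 + 1) = g 17 ((rho c 3).factorization 17) + 1) := by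
    by_cases h16 : 16 ∣ c
    · by_cases h17 : 17 ∣ c
      · have h := s7c h16 h17
        exact Or.inr (Or.inr ⟨h16, h17,
          by rw [g_big 17 _ (by omega), g_big 17 _ (by omega)]; omega⟩)
      · have h := s7b h16 h17
        exact Or.inr (Or.inl ⟨h16, h17, by rw [h]; norm_num [g_def],
          by rw [h]; norm_num [g_def]⟩)
    · have h := s7a h16
      exact Or.inl ⟨h16, by rw [h]; norm_num [g_def], by rw [h]; norm_num [g_def]⟩
  have e3 : g 3 ((rho c 3).factorization 3 + 2) = (rho c 3).factorization 3 + 5 := by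
    rw [g_big 3 _ (by omega)]; omega
  have e3' : g 3 ((rho c 3).factorization 3 + 3) = (rho c 3).factorization 3 + 6 := by
    rw [g_big 3 _ (by omega)]; omega
  have e2 : g 2 1 = 2 := by norm_num [g_def]
  have hgcd : (Nat.gcd c 91 = 1) ↔ (¬7 ∣ c ∧ ¬13 ∣ c) := by
    have h7 : Nat.Coprime c 7 ↔ ¬7 ∣ c := by
      rw [Nat.coprime_comm]
      exact Nat.Prime.coprime_iff_not_dvd (by norm_num)
    have h13 : Nat.Coprime c 13 ↔ ¬13 ∣ c := by
      rw [Nat.coprime_comm]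
      exact Nat.Prime.coprime_iff_not_dvd (by norm_num)
    have h91 : Nat.Coprime c 91 ↔ (Nat.Coprime c 7 ∧ Nat.Coprime c 13) := by
      rw [show (91:ℕ) = 7 * 13 by norm_num, Nat.coprime_mul_iff_right]
    exact h91.trans (and_congr h7 h13)
  have h272 : 272 ∣ c ↔ (16 ∣ c ∧ 17 ∣ c) := by omega
  have key : v (819 * rho c 3) = v (918 * rho c 3) ↔
      (c % 2 = 1 ∨ ((16 ∣ c ∧ 17 ∣ c) ∧ (¬7 ∣ c ∧ ¬13 ∣ c))) := by
    rw [hN, hM]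
    clear * - d7 d13 d17 e3 e3' e2
    revert d7 d13 d17 e3 e3' e2
    generalize (rho c 3).factorization 3 = a3
    generalize (rho c 3).factorization 7 = a7
    generalize (rho c 3).factorization 13 = a13
    generalize (rho c 3).factorization 17 = a17
    generalize g 3 (a3 + 2) = A1
    generalize g 3 (a3 + 3) = A2
    generalize g 7 (a7 + 1) = B1
    generalize g 7 a7 = B2
    generalize g 13 (a13 + 1) = C1
    generalize g 13 a13 = C2
    generalize g 17 a17 = D1
    generalize g 17 (a17 + 1) = D2
    generalize g 2 1 = E1
    intros
    omega
  unfold VPalindromic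
  rw [hr, Nat.odd_iff, hgcd, h272]
  exact ⟨fun h => key.mp h.2.2, fun h => ⟨h10, hne, key.mpr h⟩⟩
end

section
/- For every c ≥ 1, the digit reversal of 819·ρ_{c,3} equals 918·ρ_{c,3}. More generally, if n has k digits, 10 ∤ n, and r(n) has k digits, then r(n·ρ_{c,k}) = r(n)·ρ_{c,k} for all c ≥ 1. -/
lemma geom_aux (x c : ℕ) (hx : 1 ≤ x) :
    (∑ i ∈ Finset.range c, x ^ i) * (x - 1) + 1 = x ^ c := by
  induction c with
  | zero => simp
  | succ c ih =>
    obtain ⟨y, rfl⟩ : ∃ y, x = y + 1 := ⟨x - 1, by omega⟩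
    rw [Finset.sum_range_succ, add_mul, pow_succ]
    set a := ∑ i ∈ Finset.range c, (y + 1) ^ i
    set b := (y + 1) ^ c with hb
    calc a * (y + 1 - 1) + b * (y + 1 - 1) + 1
        = (a * (y + 1 - 1) + 1) + b * y := by simp; ring
      _ = b + b * y := by rw [ih]
      _ = b * (y + 1) := by ring

lemma rho_eq (c k : ℕ) : rho c k = ∑ i ∈ Finset.range c, (10 ^ k) ^ i := by
  unfold rho; exact Finset.sum_congr rfl fun i _ => by rw [← pow_mul]

lemma len_eq (m k : ℕ) (hk : 1 ≤ k) (h1 : 10 ^ (k - 1) ≤ m) (h2 : m < 10 ^ k) :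
    (Nat.digits 10 m).length = k := by
  have hm : m ≠ 0 := by
    have : 1 ≤ 10 ^ (k - 1) := Nat.one_le_pow _ _ (by norm_num)
    omega
  rw [Nat.digits_len 10 m (by norm_num) hm]
  have h2' : m < 10 ^ (k - 1 + 1) := by rwa [Nat.sub_add_cancel hk]
  have := Nat.log_eq_of_pow_le_of_lt_pow h1 h2'
  omega

lemma r_add (n M k : ℕ) (hlen : (Nat.digits 10 n).length = k) :
    r (n + 10 ^ k * M) = r M + 10 ^ (Nat.digits 10 M).length * r n := by
  unfold r
  rw [← hlen, ← Nat.digits_append_digits (by norm_num : (0:ℕ) < 10),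
    List.reverse_append, Nat.ofDigits_append, List.length_reverse]

lemma rho_bounds (n k c : ℕ) (hk : 1 ≤ k) (hc : 1 ≤ c)
    (h1 : 10 ^ (k - 1) ≤ n) (h2 : n < 10 ^ k) :
    10 ^ (k * c - 1) ≤ n * rho c k ∧ n * rho c k < 10 ^ (k * c) := by
  have hx : (1:ℕ) ≤ 10 ^ k := Nat.one_le_pow _ _ (by norm_num)
  constructor
  · have hterm : 10 ^ (k * (c - 1)) ≤ rho c k := by
      unfold rho
      exact Finset.single_le_sum (f := fun i => 10 ^ (k * i)) (fun i _ => Nat.zero_le _)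
        (Finset.mem_range.mpr (by omega))
    calc 10 ^ (k * c - 1) = 10 ^ (k - 1) * 10 ^ (k * (c - 1)) := by
          rw [← pow_add]; congr 1; cases c with
          | zero => omega
          | succ c => simp [Nat.mul_succ]; omega
      _ ≤ n * rho c k := Nat.mul_le_mul h1 hterm
  · have key : rho c k * (10 ^ k - 1) + 1 = 10 ^ (k * c) := by
      rw [rho_eq, geom_aux _ _ hx, ← pow_mul, mul_comm k c]
    have hn : n ≤ 10 ^ k - 1 := by omega
    have h3 : n * rho c k ≤ (10 ^ k - 1) * rho c k :=
      Nat.mul_le_mul_right _ hn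
    have key2 : (10 ^ k - 1) * rho c k + 1 = 10 ^ (k * c) := by
      rw [mul_comm]; exact key
    omega

theorem stmt14 :
    (∀ c : ℕ, 1 ≤ c → r (819 * rho c 3) = 918 * rho c 3) ∧
    (∀ n k : ℕ, 1 ≤ k → 10 ^ (k - 1) ≤ n → n < 10 ^ k → ¬ (10 ∣ n) →
      10 ^ (k - 1) ≤ r n → r n < 10 ^ k →
      ∀ c : ℕ, 1 ≤ c → r (n * rho c k) = r n * rho c k) := by
  have main : ∀ n k : ℕ, 1 ≤ k → 10 ^ (k - 1) ≤ n → n < 10 ^ k → ¬ (10 ∣ n) →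
      10 ^ (k - 1) ≤ r n → r n < 10 ^ k →
      ∀ c : ℕ, 1 ≤ c → r (n * rho c k) = r n * rho c k := by
    intro n k hk h1 h2 _ _ _ c hc
    induction c, hc using Nat.le_induction with
    | base => simp [rho]
    | succ c hc ih =>
      have hlen : (Nat.digits 10 n).length = k := len_eq n k hk h1 h2
      have hdec : n * rho (c + 1) k = n + 10 ^ k * (n * rho c k) := by
        have : rho (c + 1) k = 1 + 10 ^ k * rho c k := by
          unfold rho
          rw [Finset.sum_range_succ', Finset.mul_sum, Nat.mul_zero, pow_zero, add_comm]
          congr 1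
          exact Finset.sum_congr rfl fun i _ => by rw [Nat.mul_succ, pow_add]; ring
        rw [this]; ring
      have hb := rho_bounds n k c hk hc h1 h2
      have hlenM : (Nat.digits 10 (n * rho c k)).length = k * c :=
        len_eq _ _ (by nlinarith) hb.1 hb.2
      rw [hdec, r_add n _ k hlen, hlenM, ih]
      have : rho (c + 1) k = rho c k + 10 ^ (k * c) := by
        unfold rho; rw [Finset.sum_range_succ]
      rw [this]; ring
  refine ⟨fun c hc => ?_, main⟩
  have h819 : r 819 = 918 := by norm_num [r, Nat.ofDigits]
  rw [← h819]
  exact main 819 3 (by norm_num) (by norm_num) (by norm_num) (by omega)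
    (by rw [h819]; norm_num) (by rw [h819]; norm_num) c hc
end

section
/- Every number of the form 2199…978, i.e., every n whose decimal digits are 2, 1, then m nines, then 7, 8, for m ≥ 0, satisfies 4n = r(n). -/
lemma ofDigits_rep9 (m : ℕ) : Nat.ofDigits 10 (List.replicate m 9) = 10 ^ m - 1 := by
  induction m with
  | zero => simp
  | succ k ih =>
    rw [List.replicate_succ, Nat.ofDigits_cons, ih, pow_succ]
    have h : 1 ≤ 10 ^ k := Nat.one_le_pow _ _ (by norm_num)
    omega

lemma digits_n (m : ℕ) :
    Nat.digits 10 (21 * 10 ^ (m + 2) + (10 ^ m - 1) * 10 ^ 2 + 78) =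
      [8, 7] ++ List.replicate m 9 ++ [1, 2] := by
  have hval : Nat.ofDigits 10 ([8, 7] ++ List.replicate m 9 ++ [1, 2]) =
      21 * 10 ^ (m + 2) + (10 ^ m - 1) * 10 ^ 2 + 78 := by
    rw [Nat.ofDigits_append, Nat.ofDigits_append, ofDigits_rep9]
    simp [Nat.ofDigits_cons, Nat.ofDigits_nil, List.length_replicate]
    have h : 1 ≤ 10 ^ m := Nat.one_le_pow _ _ (by norm_num)
    rw [pow_add]
    ring_nf
  rw [← hval]
  apply Nat.digits_ofDigits 10 (by norm_num)
  · intro d hd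
    simp at hd
    rcases hd with h | h | h <;> omega
  · intro h
    simp [List.getLast_append]

theorem stmt17 (m : ℕ) :
    4 * (21 * 10 ^ (m + 2) + (10 ^ m - 1) * 10 ^ 2 + 78) =
      r (21 * 10 ^ (m + 2) + (10 ^ m - 1) * 10 ^ 2 + 78) := by
  unfold r
  rw [digits_n]
  have hrev : ([8, 7] ++ List.replicate m 9 ++ [1, 2]).reverse =
      [2, 1] ++ List.replicate m 9 ++ [7, 8] := by
    simp [List.reverse_append]
  rw [hrev, Nat.ofDigits_append, Nat.ofDigits_append, ofDigits_rep9]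
  simp [Nat.ofDigits_cons, Nat.ofDigits_nil, List.length_replicate]
  have h : 1 ≤ 10 ^ m := Nat.one_le_pow _ _ (by norm_num)
  rw [pow_add]
  ring_nf
  omega
end

section
/- For every m ≥ 0, the number n_m = 2·10^{m+2} − 2 = 19…98 (decimal digits 1, then nines, then 8) is v-palindromic. -/
lemma digitsA (k : ℕ) : Nat.digits 10 (2*10^k - 1) = List.replicate k 9 ++ [1] := by
  induction k with
  | zero => norm_num
  | succ k ih =>
    have h10 : (10:ℕ)^(k+1) = 10 * 10^k := by ring
    have hpos : 0 < 2*10^(k+1) - 1 := by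
      have : 1 ≤ (10:ℕ)^(k+1) := Nat.one_le_pow _ _ (by norm_num)
      omega
    rw [Nat.digits_def' (by norm_num : (1:ℕ) < 10) hpos]
    have key : 2*10^(k+1) - 1 = 10 * (2*10^k - 1) + 9 := by
      have : 1 ≤ (10:ℕ)^k := Nat.one_le_pow _ _ (by norm_num)
      rw [h10]; omega
    have h1 : (2*10^(k+1) - 1) % 10 = 9 := by omega
    have h2 : (2*10^(k+1) - 1) / 10 = 2*10^k - 1 := by omega
    rw [h1, h2, ih, List.replicate_succ]
    simp

lemma digitsN (m : ℕ) : Nat.digits 10 (2*10^(m+2) - 2) = 8 :: (List.replicate (m+1) 9 ++ [1]) := by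
  have h1 : 1 ≤ (10:ℕ)^(m+1) := Nat.one_le_pow _ _ (by norm_num)
  have heq : 2*10^(m+2) - 2 = 10 * (2*10^(m+1) - 1) + 8 := by
    have : (10:ℕ)^(m+2) = 10 * 10^(m+1) := by ring
    omega
  have hpos : 0 < 2*10^(m+2) - 2 := by
    have : 1 ≤ (10:ℕ)^(m+2) := Nat.one_le_pow _ _ (by norm_num)
    omega
  rw [Nat.digits_def' (by norm_num : (1:ℕ) < 10) hpos]
  have hm : (2*10^(m+2) - 2) % 10 = 8 := by omega
  have hd : (2*10^(m+2) - 2) / 10 = 2*10^(m+1) - 1 := by omega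
  rw [hm, hd, digitsA]

lemma ofDigitsB (k : ℕ) : Nat.ofDigits 10 (List.replicate k 9 ++ [8]) = 9*10^k - 1 := by
  induction k with
  | zero => norm_num [Nat.ofDigits]
  | succ k ih =>
    rw [List.replicate_succ, List.cons_append, Nat.ofDigits_cons, ih]
    have : 1 ≤ (10:ℕ)^k := Nat.one_le_pow _ _ (by norm_num)
    have : (10:ℕ)^(k+1) = 10 * 10^k := by ring
    omega

lemma rN (m : ℕ) : r (2*10^(m+2) - 2) = 9 * (10^(m+2) - 1) := by
  rw [r, digitsN]
  have hl : (8 :: (List.replicate (m+1) 9 ++ [1])).reverse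
      = 1 :: (List.replicate (m+1) 9 ++ [8]) := by simp
  rw [hl, Nat.ofDigits_cons, ofDigitsB]
  have h1 : 1 ≤ (10:ℕ)^(m+1) := Nat.one_le_pow _ _ (by norm_num)
  have : (10:ℕ)^(m+2) = 10 * 10^(m+1) := by ring
  omega

lemma v_mul {a b : ℕ} (ha : a ≠ 0) (hb : b ≠ 0) (h : Nat.Coprime a b) :
    v (a*b) = v a + v b := by
  unfold v
  rw [Nat.primeFactors_mul ha hb, Finset.sum_union h.disjoint_primeFactors]
  congr 1
  · apply Finset.sum_congr rfl
    intro p hp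
    have hpd : ¬ p ∣ b := by
      intro hd
      have h1 : p ∣ a := Nat.dvd_of_mem_primeFactors hp
      have := (h.coprime_dvd_left h1).eq_one_of_dvd hd
      exact (Nat.prime_of_mem_primeFactors hp).one_lt.ne' this
    rw [Nat.factorization_mul ha hb]
    simp [Nat.factorization_eq_zero_of_not_dvd hpd]
  · apply Finset.sum_congr rfl
    intro p hp
    have hpd : ¬ p ∣ a := by
      intro hd
      have h1 : p ∣ b := Nat.dvd_of_mem_primeFactors hp
      have := ((h.coprime_dvd_right h1).symm).eq_one_of_dvd hd
      exact (Nat.prime_of_mem_primeFactors hp).one_lt.ne' this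
    rw [Nat.factorization_mul ha hb]
    simp [Nat.factorization_eq_zero_of_not_dvd hpd]

lemma v_pow {p k : ℕ} (hp : p.Prime) (hk : 2 ≤ k) : v (p^k) = p + k := by
  unfold v
  rw [Nat.primeFactors_pow _ (by omega), hp.primeFactors]
  rw [Finset.sum_singleton, hp.factorization_pow]
  simp
  omega

lemma v_two : v 2 = 2 := by
  unfold v
  rw [Nat.Prime.primeFactors Nat.prime_two, Finset.sum_singleton,
    Nat.Prime.factorization Nat.prime_two]
  simp

theorem stmt18 (m : ℕ) : VPalindromic (2 * 10 ^ (m + 2) - 2) := by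
  set M := 10^(m+2) - 1 with hM
  have h1 : 1 ≤ (10:ℕ)^(m+2) := Nat.one_le_pow _ _ (by norm_num)
  have hMpos : 0 < M := by
    have : (10:ℕ) ≤ 10^(m+2) := by
      calc (10:ℕ) = 10^1 := by norm_num
      _ ≤ 10^(m+2) := Nat.pow_le_pow_right (by norm_num) (by omega)
    omega
  have hn : 2 * 10^(m+2) - 2 = 2 * M := by omega
  have hr : r (2 * 10^(m+2) - 2) = 9 * M := rN m
  have h9 : 9 ∣ M := by
    have := Nat.sub_dvd_pow_sub_pow 10 1 (m+2)
    simpa using this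
  set a := M.factorization 3 with ha
  set Q := M / 3^a with hQ
  have hMeq : 3^a * Q = M := Nat.ordProj_mul_ordCompl_eq_self M 3
  have ha2 : 2 ≤ a :=
    (Nat.Prime.pow_dvd_iff_le_factorization Nat.prime_three hMpos.ne').mp
      ((show (3:ℕ)^2 = 9 by norm_num) ▸ h9)
  have hQpos : 0 < Q := Nat.ordCompl_pos 3 hMpos.ne'
  have hcop3Q : Nat.Coprime 3 Q := Nat.coprime_ordCompl Nat.prime_three hMpos.ne'
  have hQdvd : Q ∣ M := ⟨3^a, by rw [← hMeq]; ring⟩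
  have hModd : ¬ 2 ∣ M := by
    intro h2
    have h10 : 2 ∣ (10:ℕ)^(m+2) := dvd_pow (by norm_num) (by omega)
    omega
  have hcop2Q : Nat.Coprime 2 Q :=
    (Nat.Prime.coprime_iff_not_dvd Nat.prime_two).mpr (fun h => hModd (h.trans hQdvd))
  refine ⟨?_, ?_, ?_⟩
  · intro hdvd
    have h5 : 5 ∣ 2 * 10^(m+2) - 2 := dvd_trans (by norm_num) hdvd
    have h510 : 5 ∣ (10:ℕ)^(m+2) := dvd_pow (by norm_num) (by omega)
    omega
  · rw [hr, hn]
    omega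
  · rw [hr, hn]
    have hvn : v (2 * M) = 2 + (3 + a) + v Q := by
      rw [← hMeq, ← mul_assoc]
      rw [v_mul (by positivity) hQpos.ne'
        (Nat.coprime_mul_iff_left.mpr ⟨hcop2Q, Nat.Coprime.pow_left a hcop3Q⟩)]
      rw [v_mul (by norm_num) (by positivity)
        (Nat.Coprime.pow_right a (by norm_num : Nat.Coprime 2 3))]
      rw [v_two, v_pow Nat.prime_three ha2]
    have hvr : v (9 * M) = (3 + (a + 2)) + v Q := by
      rw [← hMeq, show (9:ℕ) * (3^a * Q) = 3^(a+2) * Q by ring]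
      rw [v_mul (by positivity) hQpos.ne' (Nat.Coprime.pow_left _ hcop3Q)]
      rw [v_pow Nat.prime_three (by omega)]
    rw [hvn, hvr]
    ring
end
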